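/- arXiv:1411.7137 — 2 statements merged into one kernel-verified Lean document; each statement's English description precedes it below -/
import Mathlib

section
/- Let V be a topological real vector space, F ⊆ V a subset, and M ⊆ V a subset such that F + M ⊆ F. Define F̃ = {x ∈ V : −x ∉ interior F}. Then F̃ + M ⊆ F̃. -/
open Pointwise

/-!
The interior of `F` inherits the monotonicity `F + M ⊆ F`, because `interior F + M` is an open
subset of `F + M ⊆ F`. Monotonicity then passes to the complement of `-interior F` by a purely
algebraic argument: if `-(x + m) ∈ interior F` then `-x = -(x + m) + m ∈ interior F`.
-/

theorem interior_add_subset_of_add_subset {V : Type*} [AddCommGroup V] [TopologicalSpace V]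
    [IsTopologicalAddGroup V] {F M : Set V} (hFM : F + M ⊆ F) :
    interior F + M ⊆ interior F :=
  interior_maximal ((Set.add_subset_add_right interior_subset).trans hFM)
    isOpen_interior.add_right

theorem setOf_neg_notMem_add_subset {V : Type*} [AddCommGroup V] {G M : Set V}
    (hGM : G + M ⊆ G) :
    {x : V | -x ∉ G} + M ⊆ {x : V | -x ∉ G} := by
  rintro _ ⟨x, hx, m, hm, rfl⟩ hxm
  refine hx ?_
  have hx_eq : -x = -(x + m) + m := by abel
  exact hx_eq ▸ hGM (Set.add_mem_add hxm hm)

theorem stmt_4_general {V : Type*} [AddCommGroup V] [TopologicalSpace V]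
    [IsTopologicalAddGroup V]
    (F M : Set V) (hFM : F + M ⊆ F) :
    {x : V | -x ∉ interior F} + M ⊆ {x : V | -x ∉ interior F} :=
  setOf_neg_notMem_add_subset (interior_add_subset_of_add_subset hFM)

/-- If `M` is a monotonicity set for `F` (i.e. `F + M ⊆ F`), then `M` is a monotonicity set
for the Dirichlet dual `F̃ = {x | -x ∉ interior F}`. -/
theorem stmt_4 {V : Type*} [AddCommGroup V] [Module ℝ V] [TopologicalSpace V]
    [IsTopologicalAddGroup V] [ContinuousSMul ℝ V]
    (F M : Set V) (hFM : F + M ⊆ F) :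
    {x : V | -x ∉ interior F} + M ⊆ {x : V | -x ∉ interior F} :=
  stmt_4_general F M hFM
end

section
/- Let X be a topological space, 𝒬 a set of functions X → ℝ, and 𝒫 ⊆ 𝒬 a subset. Assume: (i) 𝒬 is closed under u ↦ max(u, 0); (ii) for every u ∈ 𝒬 there is a pointwise decreasing sequence (u_j) of continuous functions with u_j ∈ 𝒫 and u_j(x) → u(x) for all x. For a compact set K ⊆ X and a family 𝒮 of functions, define the hull Ĥ_𝒮(K) = {x ∈ X : ∀v ∈ 𝒮, v(x) ≤ sup_K v}. Then Ĥ_𝒬(K) = Ĥ_𝒫(K). -/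
open Filter Topology

/-- Abstract form of Corollary 4.3: if every function of `Q` is a decreasing limit of
continuous functions in `P ⊆ Q`, and `Q` is stable under `u ↦ max(u,0)`, then the hulls
of a compact set computed with `Q` and with `P` agree. -/
theorem stmt_10 {X : Type*} [TopologicalSpace X] (Q P : Set (X → ℝ)) (hPQ : P ⊆ Q)
    (hmax : ∀ u ∈ Q, (fun x => max (u x) 0) ∈ Q)
    (happrox : ∀ u ∈ Q, ∃ v : ℕ → X → ℝ,
      (∀ j, Continuous (v j)) ∧ (∀ j, v j ∈ P) ∧ (∀ j x, v (j + 1) x ≤ v j x) ∧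
      (∀ x, Tendsto (fun j => v j x) atTop (𝓝 (u x))))
    (K : Set X) (hK : IsCompact K) :
    {x : X | ∀ v ∈ Q, v x ≤ sSup (v '' K)} = {x : X | ∀ v ∈ P, v x ≤ sSup (v '' K)} := by
  apply Set.Subset.antisymm
  · intro x hx v hv
    exact hx v (hPQ hv)
  · intro x hx u hu
    obtain ⟨v, hcont, hvP, hdec, hlim⟩ := happrox u hu
    have hanti : ∀ y, Antitone (fun j => v j y) := fun y =>
      antitone_nat_of_succ_le (fun j => hdec j y)
    have hle : ∀ j y, u y ≤ v j y := by
      intro j y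
      refine le_of_tendsto (hlim y) ?_
      filter_upwards [eventually_ge_atTop j] with k hk
      exact hanti y hk
    rcases K.eq_empty_or_nonempty with hKe | hKne
    · subst hKe
      have h0 := hx (v 0) (hvP 0)
      simp only [Set.image_empty, Real.sSup_empty] at h0 ⊢
      exact (hle 0 x).trans h0
    · -- K nonempty; u '' K is bounded above since u ≤ v 0 on K
      obtain ⟨C, hC⟩ := hK.bddAbove_image (hcont 0).continuousOn
      have hM : BddAbove (u '' K) := by
        refine ⟨C, ?_⟩
        rintro _ ⟨y, hy, rfl⟩
        exact (hle 0 y).trans (hC ⟨y, hy, rfl⟩)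
      set M := sSup (u '' K) with hMdef
      refine le_of_forall_pos_le_add ?_
      intro ε hε
      -- for each y ∈ K choose j with v j y < M + ε
      have hJ : ∀ y : K, ∃ j, v j (y : X) < M + ε := by
        intro y
        have huy : u (y : X) < M + ε :=
          lt_of_le_of_lt (le_csSup hM ⟨y, y.2, rfl⟩) (lt_add_of_pos_right _ hε)
        exact ((hlim (y : X)).eventually_lt_const huy).exists
      choose J hJ' using hJ
      -- open cover of K
      have hcover : K ⊆ ⋃ y : K, {z | v (J y) z < M + ε} := by
        intro z hz
        exact Set.mem_iUnion.2 ⟨⟨z, hz⟩, hJ' ⟨z, hz⟩⟩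
      obtain ⟨t, ht⟩ := hK.elim_finite_subcover (fun y : K => {z | v (J y) z < M + ε})
        (fun y => isOpen_lt (hcont (J y)) continuous_const) hcover
      set N := t.sup J with hN
      have hNle : ∀ z ∈ K, v N z ≤ M + ε := by
        intro z hz
        obtain ⟨y, hyt, hzy⟩ := Set.mem_iUnion₂.1 (ht hz)
        have hle' : v N z ≤ v (J y) z := hanti z (Finset.le_sup hyt)
        exact hle'.trans hzy.le
      have hsup : sSup (v N '' K) ≤ M + ε := by
        apply csSup_le (hKne.image _)
        rintro _ ⟨z, hz, rfl⟩
        exact hNle z hz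
      exact ((hle N x).trans (hx (v N) (hvP N))).trans hsup
end
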